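/- Let R be a tangible supertropical semiring (e·𝒯(R) = 𝒢(R)) with 𝒢(R) a cancellative monoid under multiplication, V a free R-module with base (ε_i)_{i∈I}, I = {1,…,n}, and (q,b) a quadratic pair on V. Suppose y, z ∈ V are g-anisotropic and q-minimal, that y ∨ z has full support I, that e·b(y,z) < e·q(y) = e·q(z), and that either (n = 3, |supp(y)| = 1, |supp(z)| = 2) or (n = 4, |supp(y)| = |supp(z)| = 2). Then x := y ∨ z is q-minimal. -/

import Mathlib

open scoped Classical

namespace Supertrop

section Defs

variable (R : Type*) [CommSemiring R]

/-- The distinguished element `e = 1 + 1` of a semiring. -/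
def eps : R := 1 + 1

/-- `R` is a supertropical semiring: `e` is additively idempotent, and the two
supertropical addition axioms hold. -/
def IsSupertropical : Prop :=
  eps R + eps R = eps R ∧
    (∀ x y : R, eps R * x ≠ eps R * y → x + y = x ∨ x + y = y) ∧
    (∀ x y : R, eps R * x = eps R * y → x + y = eps R * y)

/-- The ghost ideal `eR`, as a subset of `R`. -/
def eSet : Set R := Set.range (fun a : R => eps R * a)

/-- The tangible elements `𝒯(R) = R \ eR`. -/
def tangible : Set R := {x : R | x ∉ eSet R}

/-- The nonzero ghost elements `𝒢(R) = eR \ {0}`. -/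
def ghost : Set R := eSet R \ {0}

end Defs

section Orders

variable {R : Type*} [CommSemiring R]

/-- The minimal ordering on an additive monoid: `x ≤ y` iff `∃ z, x + z = y`. -/
def mle {M : Type*} [AddCommMonoid M] (x y : M) : Prop := ∃ z, x + z = y

/-- Strict minimal ordering. -/
def mlt {M : Type*} [AddCommMonoid M] (x y : M) : Prop := mle x y ∧ x ≠ y

/-- The (total) ordering of the bipotent semiring `eR`: `u ≤ v ⟺ u + v = v`. -/
def gle (u v : R) : Prop := u + v = v

/-- The strict ordering of `eR`. -/
def glt (u v : R) : Prop := gle u v ∧ u ≠ v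

end Orders

section SSF

variable (R : Type*) [CommSemiring R]

/-- `R` is a supersemifield: supertropical, every tangible element is invertible in `R`,
and `𝒢(R)` is a group under multiplication with identity `e`. -/
def IsSupersemifield : Prop :=
  IsSupertropical R ∧
    (∀ t ∈ tangible R, IsUnit t) ∧
    eps R ∈ ghost R ∧
    (∀ g ∈ ghost R, ∀ h ∈ ghost R, g * h ∈ ghost R) ∧
    (∀ g ∈ ghost R, ∃ h ∈ ghost R, g * h = eps R)

/-- The supersemifield `R` is tangible: `e·𝒯(R) = 𝒢(R)`. -/
def TangibleSSF : Prop := (fun t => eps R * t) '' tangible R = ghost R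

/-- Nontriviality: `𝒢(R) ≠ {e}`. -/
def NontrivialG : Prop := ghost R ≠ {eps R}

/-- `R` is discrete: `𝒢(R)` has a smallest element `> e`. -/
def DiscreteR : Prop :=
  ∃ c ∈ ghost R, glt (eps R) c ∧ ∀ d ∈ ghost R, glt (eps R) d → gle c d

/-- `R` is dense: `𝒢(R)` has no smallest element `> e`. -/
def DenseR : Prop := ¬ DiscreteR R

/-- `eR` is a semifield: `e ≠ 0`, `𝒢(R)` is closed under multiplication, and every
element of `𝒢(R)` is invertible in `eR` with respect to the identity `e`. -/
def GhostSemifield : Prop :=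
  eps R ∈ ghost R ∧
    (∀ g ∈ ghost R, ∀ h ∈ ghost R, g * h ∈ ghost R) ∧
    (∀ g ∈ ghost R, ∃ h ∈ ghost R, g * h = eps R)

end SSF

section Quad

variable {R : Type*} [CommSemiring R] {V : Type*} [AddCommMonoid V] [Module R V]

/-- `b` is a (symmetric bilinear) companion of the quadratic form `q`. -/
def IsCompanion (q : V → R) (b : V → V → R) : Prop :=
  (∀ x y, b x y = b y x) ∧
    (∀ x y z, b (x + y) z = b x z + b y z) ∧
    (∀ (a : R) (x y : V), b (a • x) y = a * b x y) ∧
    (∀ x y, q (x + y) = q x + q y + b x y)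

/-- `(q, b)` is a quadratic pair on `V`. -/
def IsQuadPair (q : V → R) (b : V → V → R) : Prop :=
  (∀ (a : R) (x : V), q (a • x) = a ^ 2 * q x) ∧ IsCompanion q b

/-- `q` is a quadratic form on `V`. -/
def IsQuadForm (q : V → R) : Prop := ∃ b, IsQuadPair q b

/-- `q` is quasilinear (i.e. additive) on the submodule `W`. -/
def QuasilinearOn (q : V → R) (W : Submodule R V) : Prop :=
  ∀ u ∈ W, ∀ v ∈ W, q (u + v) = q u + q v

/-- `x` is `q`-minimal: `q x' < q x` for every `x' < x` (in the minimal orderings). -/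
def QMinimal (q : V → R) (x : V) : Prop := ∀ x' : V, mlt x' x → mlt (q x') (q x)

/-- The maximum of two elements of `R` with respect to the minimal ordering. -/
noncomputable def rsup (a b : R) : R := if a = b then a else a + b

/-- The componentwise maximum `x ∨ y` (in the minimal ordering) of two vectors
of a free module. -/
noncomputable def vsup {ι : Type*} (bV : Module.Basis ι R V) (x y : V) : V :=
  bV.repr.symm (Finsupp.zipWith rsup (by simp [rsup]) (bV.repr x) (bV.repr y))

/-- The restriction `x(J)` of a vector to a subset `J` of the index set of the base. -/
noncomputable def restrict {ι : Type*} (bV : Module.Basis ι R V) (x : V) (J : Finset ι) : V :=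
  ∑ i ∈ J, (bV.repr x) i • bV i

/-- The CS-ratio `CS(x,y) = e·b(x,y)² · (e·q(x)·q(y))⁻¹`, where `inv` is the
inversion of the semifield `eR`. -/
noncomputable def CSratio (q : V → R) (b : V → V → R) (inv : R → R) (x y : V) : R :=
  eps R * (b x y) ^ 2 * inv (eps R * (q x * q y))

end Quad

/-!
The size conditions force `y` and `z` to have disjoint supports, so `x = y + z` and
`q(x) = q(y) + q(z) + b(y,z) = e·q(y)`. A `g`-anisotropic `q`-minimal vector `v` with at most two
nonzero coordinates is even ghost `q`-minimal, i.e. `e·q(v') < e·q(v)` for all `v' < v`: `q(v)` is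
a single dominant tangible monomial, and multiplication by an element of the cancellative monoid
`𝒢(R)` is strictly monotone. Every `x' < x` splits as `y' + z'` with `y' ≤ y` and `z' ≤ z`. If
`y' = y`, the other terms of `q(x')` are ghost-dominated by `q(y)`, so `q(x') = q(y)` is tangible
and differs from the ghost `q(x)`; likewise if `z' = z`; otherwise `e·q(x') < e·q(x)`.
-/

section Supertropical

variable {R : Type*} [CommSemiring R]

theorem eps_mul_eps (hR : IsSupertropical R) : eps R * eps R = eps R :=
  calc eps R * eps R = eps R + eps R := by unfold eps; ring
    _ = eps R := hR.1

theorem eps_mul_eps_mul (hR : IsSupertropical R) (a : R) :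
    eps R * (eps R * a) = eps R * a := by
  rw [← mul_assoc, eps_mul_eps hR]

theorem eps_mul_mem_eSet (a : R) : eps R * a ∈ eSet R := ⟨a, rfl⟩

theorem eps_mul_of_mem_eSet (hR : IsSupertropical R) {u : R} (hu : u ∈ eSet R) :
    eps R * u = u := by
  obtain ⟨a, rfl⟩ := hu
  exact eps_mul_eps_mul hR a

theorem tangible_of_mul_tangible_left {u v : R} (h : u * v ∈ tangible R) : u ∈ tangible R := by
  rintro ⟨a, rfl⟩
  exact h ⟨a * v, (mul_assoc _ _ _).symm⟩

theorem ne_eps_mul_of_tangible {t : R} (ht : t ∈ tangible R) (a : R) : t ≠ eps R * a :=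
  fun h => ht (h ▸ eps_mul_mem_eSet a)

theorem mle_refl {M : Type*} [AddCommMonoid M] (x : M) : mle x x := ⟨0, add_zero x⟩

theorem mle_mul {a a' c c' : R} (h : mle a c) (h' : mle a' c') : mle (a * a') (c * c') := by
  obtain ⟨w, rfl⟩ := h
  obtain ⟨w', rfl⟩ := h'
  exact ⟨a * w' + w * a' + w * w', by ring⟩

theorem mle_sq_mul {a c : R} (h : mle a c) (t : R) : mle (a ^ 2 * t) (c ^ 2 * t) :=
  mle_mul (by rw [pow_two, pow_two]; exact mle_mul h h) (mle_refl t)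

theorem gle_trans {u v w : R} (h₁ : gle u v) (h₂ : gle v w) : gle u w := by
  unfold gle at *
  rw [← h₂, ← add_assoc, h₁]

theorem gle_antisymm {u v : R} (h₁ : gle u v) (h₂ : gle v u) : u = v := by
  unfold gle at *
  rw [← h₂, add_comm, h₁]

theorem gle_glt_trans {u v w : R} (h₁ : gle u v) (h₂ : glt v w) : glt u w :=
  ⟨gle_trans h₁ h₂.1, by rintro rfl; exact h₂.2 (gle_antisymm h₂.1 h₁)⟩

theorem gle_eps_mul_of_mle (hR : IsSupertropical R) {a c : R} (h : mle a c) :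
    gle (eps R * a) (eps R * c) := by
  obtain ⟨w, rfl⟩ := h
  show eps R * a + eps R * (a + w) = eps R * (a + w)
  rw [mul_add, ← add_assoc, ← add_mul, hR.1]

theorem add_eq_left_of_glt (hR : IsSupertropical R) {s t : R}
    (h : glt (eps R * s) (eps R * t)) : t + s = t := by
  refine (hR.2.1 t s fun h' => h.2 h'.symm).resolve_right fun h' => h.2 ?_
  refine gle_antisymm h.1 ?_
  show eps R * t + eps R * s = eps R * s
  rw [← mul_add, h']

theorem add_eq_or_of_mem_eSet (hR : IsSupertropical R) (u : R) {v : R} (hv : v ∈ eSet R) :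
    u + v = u ∨ u + v = v := by
  by_cases h : eps R * u = eps R * v
  · rw [hR.2.2 u v h, eps_mul_of_mem_eSet hR hv]
    exact Or.inr rfl
  · exact hR.2.1 u v h

theorem glt_eps_mul_add (hR : IsSupertropical R) {a c u : R}
    (ha : glt (eps R * a) u) (hc : glt (eps R * c) u) : glt (eps R * (a + c)) u := by
  rw [mul_add]
  refine ⟨?_, ?_⟩
  · show eps R * a + eps R * c + u = u
    rw [add_assoc, hc.1, ha.1]
  · rcases add_eq_or_of_mem_eSet hR (eps R * a) (eps_mul_mem_eSet c) with h | h <;>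
      rw [h]
    exacts [ha.2, hc.2]

theorem add_eq_or_of_tangible (hR : IsSupertropical R) {a c : R} (h : a + c ∈ tangible R) :
    a + c = a ∨ a + c = c :=
  hR.2.1 a c fun hE => ne_eps_mul_of_tangible h c (hR.2.2 a c hE)

theorem eq_and_glt_of_tangible_add (hR : IsSupertropical R) {a c s : R} (hs : s = a + c)
    (hst : s ∈ tangible R) (ha : a ≠ s) : s = c ∧ glt (eps R * a) (eps R * c) := by
  have hsc : s = c := by
    subst hs
    exact (add_eq_or_of_tangible hR hst).resolve_left fun h => ha h.symm
  refine ⟨hsc, ?_, fun hE => ne_eps_mul_of_tangible hst c (hs.trans (hR.2.2 a c hE))⟩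
  show eps R * a + eps R * c = eps R * c
  rw [← mul_add, ← hs, hsc]

theorem eq_and_glt_of_tangible_add_add (hR : IsSupertropical R) {a b c s : R}
    (hs : s = a + b + c) (hst : s ∈ tangible R) (ha : a ≠ s) (hb : b ≠ s) :
    s = c ∧ glt (eps R * a) (eps R * c) ∧ glt (eps R * b) (eps R * c) := by
  have hab : a + b ≠ s := by
    intro h
    rcases add_eq_or_of_tangible hR (h ▸ hst) with h' | h'
    exacts [ha (h'.symm.trans h), hb (h'.symm.trans h)]
  obtain ⟨hsc, hlt⟩ := eq_and_glt_of_tangible_add hR hs hst hab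
  exact ⟨hsc, gle_glt_trans (gle_eps_mul_of_mle hR ⟨b, rfl⟩) hlt,
    gle_glt_trans (gle_eps_mul_of_mle hR ⟨a, add_comm b a⟩) hlt⟩

theorem glt_eps_mul_of_mle_of_ne (hR : IsSupertropical R) {a c : R} (hc : c ∈ tangible R)
    (h : mle a c) (hne : a ≠ c) : glt (eps R * a) (eps R * c) := by
  refine ⟨gle_eps_mul_of_mle hR h, fun hE => ?_⟩
  obtain ⟨w, rfl⟩ := h
  rcases add_eq_or_of_tangible hR hc with h' | h'
  · exact hne h'.symm
  · rw [h'] at hE hc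
    exact ne_eps_mul_of_tangible hc w (h'.symm.trans (hR.2.2 a w hE))

theorem eps_mul_mem_ghost (htan : TangibleSSF R) {t : R} (ht : t ∈ tangible R) :
    eps R * t ∈ ghost R :=
  htan ▸ ⟨t, ht, rfl⟩

theorem eq_zero_of_eps_mul_eq_zero (hR : IsSupertropical R) (htan : TangibleSSF R) {u : R}
    (h : eps R * u = 0) : u = 0 := by
  by_cases hu : u ∈ tangible R
  · exact absurd h (eps_mul_mem_ghost htan hu).2
  · rw [← eps_mul_of_mem_eSet hR (not_not.mp hu), h]

theorem eq_zero_of_add_eq_zero (hR : IsSupertropical R) (htan : TangibleSSF R) {a c : R}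
    (h : a + c = 0) : a = 0 := by
  have hsum : eps R * a + eps R * c = 0 := by rw [← mul_add, h, mul_zero]
  rcases add_eq_or_of_mem_eSet hR (eps R * a) (eps_mul_mem_eSet c) with h' | h'
  · exact eq_zero_of_eps_mul_eq_zero hR htan (h'.symm.trans hsum)
  · rwa [eq_zero_of_eps_mul_eq_zero hR htan (h'.symm.trans hsum), add_zero] at h

def GhostCancellative (R : Type*) [CommSemiring R] : Prop :=
  (∀ g ∈ ghost R, ∀ h ∈ ghost R, g * h ∈ ghost R) ∧
    ∀ g ∈ ghost R, ∀ a ∈ ghost R, ∀ c ∈ ghost R, g * a = g * c → a = c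

theorem glt_mul_of_mem_ghost (hG : GhostCancellative R)
    {g a c : R} (hg : g ∈ ghost R) (ha : a ∈ eSet R) (hc : c ∈ eSet R) (h : glt a c) :
    glt (g * a) (g * c) := by
  refine ⟨show g * a + g * c = g * c by rw [← mul_add, h.1], fun hgac => ?_⟩
  have hc0 : c ≠ 0 := by
    rintro rfl
    exact h.2 (by simpa [gle] using h.1)
  have hgc : g * c ≠ 0 := (hG.1 g hg c ⟨hc, hc0⟩).2
  by_cases ha0 : a = 0
  · exact hgc (by rw [← hgac, ha0, mul_zero])
  · exact h.2 (hG.2 g hg a ⟨ha, ha0⟩ c ⟨hc, hc0⟩ hgac)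

/-- `c·m` tangible forces `e·m ∈ 𝒢(R)`, which can be cancelled. -/
theorem glt_eps_mul_mul_right (hR : IsSupertropical R) (htan : TangibleSSF R)
    (hG : GhostCancellative R) {a c m : R} (hcm : c * m ∈ tangible R) (h : mle a c)
    (hne : a ≠ c) :
    glt (eps R * (a * m)) (eps R * (c * m)) := by
  have hm : eps R * m ∈ ghost R := by
    refine ⟨eps_mul_mem_eSet m, fun hm0 => (eps_mul_mem_ghost htan hcm).2 ?_⟩
    rw [Set.mem_singleton_iff] at hm0 ⊢
    rw [mul_left_comm, hm0, mul_zero]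
  have hlt := glt_mul_of_mem_ghost hG hm (eps_mul_mem_eSet a) (eps_mul_mem_eSet c)
    (glt_eps_mul_of_mle_of_ne hR (tangible_of_mul_tangible_left hcm) h hne)
  have hfactor : ∀ u : R, eps R * m * (eps R * u) = eps R * (u * m) := fun u => by
    rw [mul_mul_mul_comm, eps_mul_eps hR, mul_comm m u]
  rwa [hfactor, hfactor] at hlt

theorem glt_eps_mul_mul_mul (hR : IsSupertropical R) (htan : TangibleSSF R)
    (hG : GhostCancellative R) {a₁ a₂ c₁ c₂ t : R} (ht : c₁ * c₂ * t ∈ tangible R)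
    (h₁ : mle a₁ c₁) (hne : a₁ ≠ c₁) (h₂ : mle a₂ c₂) :
    glt (eps R * (a₁ * a₂ * t)) (eps R * (c₁ * c₂ * t)) := by
  simp only [mul_assoc] at ht ⊢
  exact gle_glt_trans (gle_eps_mul_of_mle hR (mle_mul (mle_refl a₁) (mle_mul h₂ (mle_refl t))))
    (glt_eps_mul_mul_right hR htan hG ht h₁ hne)

end Supertropical

section QuadraticPair

variable {R : Type*} [CommSemiring R] {V : Type*} [AddCommMonoid V] [Module R V]
  {q : V → R} {b : V → V → R}

theorem IsQuadPair.q_smul (hqb : IsQuadPair q b) (a : R) (x : V) : q (a • x) = a ^ 2 * q x :=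
  hqb.1 a x

theorem IsQuadPair.q_add (hqb : IsQuadPair q b) (x y : V) : q (x + y) = q x + q y + b x y :=
  hqb.2.2.2.2 x y

theorem IsQuadPair.b_comm (hqb : IsQuadPair q b) (x y : V) : b x y = b y x :=
  hqb.2.1 x y

theorem IsQuadPair.b_add_right (hqb : IsQuadPair q b) (x y z : V) :
    b x (y + z) = b x y + b x z := by
  rw [hqb.b_comm, hqb.2.2.1, hqb.b_comm y, hqb.b_comm z]

theorem IsQuadPair.b_smul_right (hqb : IsQuadPair q b) (a : R) (x y : V) :
    b x (a • y) = a * b x y := by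
  rw [hqb.b_comm, hqb.2.2.2.1, hqb.b_comm]

theorem IsQuadPair.q_smul_add_smul (hqb : IsQuadPair q b) (a c : R) (x y : V) :
    q (a • x + c • y) = a ^ 2 * q x + c ^ 2 * q y + a * c * b x y := by
  rw [hqb.q_add, hqb.q_smul, hqb.q_smul, hqb.2.2.2.1, hqb.b_smul_right, mul_assoc]

theorem IsQuadPair.mle_q (hqb : IsQuadPair q b) {x y : V} (h : mle x y) : mle (q x) (q y) := by
  obtain ⟨w, rfl⟩ := h
  exact ⟨q w + b x w, by rw [hqb.q_add]; ring⟩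

theorem IsQuadPair.mle_b (hqb : IsQuadPair q b) {x x' y y' : V} (hx : mle x x') (hy : mle y y') :
    mle (b x y) (b x' y') := by
  obtain ⟨w, rfl⟩ := hx
  obtain ⟨w', rfl⟩ := hy
  refine ⟨b x w' + b w y + b w w', ?_⟩
  rw [hqb.2.2.1, hqb.b_add_right, hqb.b_add_right]
  ring

def GhostQMinimal (q : V → R) (v : V) : Prop :=
  ∀ v' : V, mlt v' v → glt (eps R * q v') (eps R * q v)

theorem qMinimal_add (hR : IsSupertropical R) (hqb : IsQuadPair q b) {y z : V}
    (hsplit : ∀ x', mle x' (y + z) → ∃ y' z', x' = y' + z' ∧ mle y' y ∧ mle z' z)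
    (hyq : q y ∈ tangible R) (hzq : q z ∈ tangible R)
    (hymin : GhostQMinimal q y) (hzmin : GhostQMinimal q z)
    (hb : glt (eps R * b y z) (eps R * q y)) (hqq : eps R * q y = eps R * q z) :
    QMinimal q (y + z) := by
  have hqx : q (y + z) = eps R * q y := by
    have hb' : glt (eps R * b y z) (eps R * (eps R * q z)) := by
      rwa [eps_mul_eps_mul hR, ← hqq]
    rw [hqb.q_add, hR.2.2 _ _ hqq, add_eq_left_of_glt hR hb', ← hqq]
  rintro x' ⟨hle, hne⟩
  refine ⟨hqb.mle_q hle, ?_⟩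
  obtain ⟨y', z', rfl, hy', hz'⟩ := hsplit x' hle
  have hb' : glt (eps R * b y' z') (eps R * q y) :=
    gle_glt_trans (gle_eps_mul_of_mle hR (hqb.mle_b hy' hz')) hb
  rw [hqx, hqb.q_add]
  by_cases hyy : y' = y
  · subst y'
    have hz'lt : glt (eps R * q z') (eps R * q y) :=
      hqq ▸ hzmin z' ⟨hz', fun h => hne (by rw [h])⟩
    rw [add_eq_left_of_glt hR hz'lt, add_eq_left_of_glt hR hb']
    exact ne_eps_mul_of_tangible hyq _
  by_cases hzz : z' = z
  · subst z'
    have hy'lt : glt (eps R * q y') (eps R * q z) := hqq ▸ hymin y' ⟨hy', hyy⟩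
    rw [hqb.b_comm, hqq] at hb'
    rw [add_comm (q y'), add_eq_left_of_glt hR hy'lt, hqb.b_comm, add_eq_left_of_glt hR hb', hqq]
    exact ne_eps_mul_of_tangible hzq _
  have hlt : glt (eps R * (q y' + q z' + b y' z')) (eps R * q y) :=
    glt_eps_mul_add hR
      (glt_eps_mul_add hR (hymin y' ⟨hy', hyy⟩) (hqq ▸ hzmin z' ⟨hz', hzz⟩)) hb'
  intro h
  exact hlt.2 (by rw [h, eps_mul_eps_mul hR])

end QuadraticPair

section Basis

variable {R : Type*} [CommSemiring R] {V : Type*} [AddCommMonoid V] [Module R V]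
  {q : V → R} {b : V → V → R} {ι : Type*} (bV : Module.Basis ι R V)

theorem mle_repr {x x' : V} (h : mle x' x) (i : ι) : mle (bV.repr x' i) (bV.repr x i) := by
  obtain ⟨w, rfl⟩ := h
  exact ⟨bV.repr w i, by rw [map_add, Finsupp.add_apply]⟩

theorem support_repr_subset_of_mle (hR : IsSupertropical R) (htan : TangibleSSF R) {x x' : V}
    (h : mle x' x) : (bV.repr x').support ⊆ (bV.repr x).support := by
  intro i hi
  rw [Finsupp.mem_support_iff] at hi ⊢
  intro hx
  obtain ⟨c, hc⟩ := mle_repr bV h i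
  exact hi (eq_zero_of_add_eq_zero hR htan (hc.trans hx))

theorem eq_smul_of_support_subset_singleton {v : V} {i : ι}
    (h : (bV.repr v).support ⊆ {i}) : v = bV.repr v i • bV i := by
  conv_lhs => rw [← bV.linearCombination_repr v]
  rw [Finsupp.linearCombination_apply,
    Finsupp.sum_of_support_subset _ h (fun k a => a • bV k) fun _ _ => zero_smul R _,
    Finset.sum_singleton]

theorem eq_smul_add_smul_of_support_subset_pair {v : V} {i j : ι} (hij : i ≠ j)
    (h : (bV.repr v).support ⊆ {i, j}) : v = bV.repr v i • bV i + bV.repr v j • bV j := by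
  conv_lhs => rw [← bV.linearCombination_repr v]
  rw [Finsupp.linearCombination_apply,
    Finsupp.sum_of_support_subset _ h (fun k a => a • bV k) fun _ _ => zero_smul R _,
    Finset.sum_pair hij]

theorem exists_add_of_mle_add {y z x' : V}
    (hdisj : Disjoint (bV.repr y).support (bV.repr z).support) (h : mle x' (y + z)) :
    ∃ y' z', x' = y' + z' ∧ mle y' y ∧ mle z' z := by
  obtain ⟨w, hw⟩ := h
  let P : ι → Prop := (· ∈ (bV.repr y).support)
  have hy : (bV.repr (y + z)).filter P = bV.repr y := by
    rw [map_add, Finsupp.filter_add, (Finsupp.filter_eq_self_iff _ _).mpr fun k hk =>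
      Finsupp.mem_support_iff.mpr hk, (Finsupp.filter_eq_zero_iff _ _).mpr fun k hk =>
      Finsupp.notMem_support_iff.mp (Finset.disjoint_left.mp hdisj hk), add_zero]
  have hz : (bV.repr (y + z)).filter (fun k => ¬ P k) = bV.repr z := by
    rw [map_add, Finsupp.filter_add, (Finsupp.filter_eq_self_iff _ _).mpr fun k hk =>
      Finset.disjoint_right.mp hdisj (Finsupp.mem_support_iff.mpr hk),
      (Finsupp.filter_eq_zero_iff _ _).mpr fun k hk => Finsupp.notMem_support_iff.mp hk, zero_add]
  refine ⟨bV.repr.symm ((bV.repr x').filter P), bV.repr.symm ((bV.repr x').filter (¬ P ·)),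
    ?_, ⟨bV.repr.symm ((bV.repr w).filter P), ?_⟩,
    ⟨bV.repr.symm ((bV.repr w).filter (¬ P ·)), ?_⟩⟩
  · rw [← map_add, Finsupp.filter_add_filter_not, LinearEquiv.symm_apply_apply]
  · rw [← map_add, ← Finsupp.filter_add, ← map_add, hw, hy, LinearEquiv.symm_apply_apply]
  · rw [← map_add, ← Finsupp.filter_add, ← map_add, hw, hz, LinearEquiv.symm_apply_apply]

theorem ghostQMinimal_of_support_eq_singleton (hR : IsSupertropical R) (htan : TangibleSSF R)
    (hG : GhostCancellative R) (hqb : IsQuadPair q b) {v : V} {i : ι} (hv : q v ∈ tangible R)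
    (hsupp : (bV.repr v).support = {i}) : GhostQMinimal q v := by
  rintro v' ⟨hle, hne⟩
  have hv_eq := eq_smul_of_support_subset_singleton bV hsupp.subset
  have hv'_eq := eq_smul_of_support_subset_singleton bV
    ((support_repr_subset_of_mle bV hR htan hle).trans hsupp.subset)
  have hci : bV.repr v' i ≠ bV.repr v i := fun h => hne (hv'_eq.trans (by rw [h, ← hv_eq]))
  rw [hv_eq, hqb.q_smul, pow_two] at hv ⊢
  rw [hv'_eq, hqb.q_smul, pow_two]
  exact glt_eps_mul_mul_mul hR htan hG hv (mle_repr bV hle i) hci (mle_repr bV hle i)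

theorem repr_sq_mul_ne_of_qMinimal (hqb : IsQuadPair q b) {v : V} (hmin : QMinimal q v)
    {i j : ι} (hij : i ≠ j) (hsupp : (bV.repr v).support = {i, j}) :
    bV.repr v i ^ 2 * q (bV i) ≠ q v := by
  have hlt : mlt (bV.repr v i • bV i) v := by
    refine ⟨⟨bV.repr v j • bV j,
      (eq_smul_add_smul_of_support_subset_pair bV hij hsupp.subset).symm⟩, fun h => ?_⟩
    have hj : j ∈ (bV.repr v).support := by simp [hsupp]
    apply Finsupp.mem_support_iff.mp hj
    rw [← h]
    simp [hij]
  rw [← hqb.q_smul]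
  exact (hmin _ hlt).2

theorem ghostQMinimal_of_support_eq_pair (hR : IsSupertropical R) (htan : TangibleSSF R)
    (hG : GhostCancellative R) (hqb : IsQuadPair q b) {v : V} {i j : ι} (hij : i ≠ j)
    (hv : q v ∈ tangible R) (hmin : QMinimal q v) (hsupp : (bV.repr v).support = {i, j}) :
    GhostQMinimal q v := by
  have hv_eq := eq_smul_add_smul_of_support_subset_pair bV hij hsupp.subset
  obtain ⟨hdom, hlti, hltj⟩ := eq_and_glt_of_tangible_add_add hR
    ((congrArg q hv_eq).trans (hqb.q_smul_add_smul _ _ _ _)) hv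
    (repr_sq_mul_ne_of_qMinimal bV hqb hmin hij hsupp)
    (repr_sq_mul_ne_of_qMinimal bV hqb hmin hij.symm (hsupp.trans (Finset.pair_comm i j)))
  rintro v' ⟨hle, hne⟩
  have hv'_eq := eq_smul_add_smul_of_support_subset_pair bV hij
    ((support_repr_subset_of_mle bV hR htan hle).trans hsupp.subset)
  have hi := mle_repr bV hle i
  have hj := mle_repr bV hle j
  rw [hdom] at hv ⊢
  have hcross : glt (eps R * (bV.repr v' i * bV.repr v' j * b (bV i) (bV j)))
      (eps R * (bV.repr v i * bV.repr v j * b (bV i) (bV j))) := by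
    by_cases hci : bV.repr v' i = bV.repr v i
    · have hcj : bV.repr v' j ≠ bV.repr v j :=
        fun hcj => hne (hv'_eq.trans (by rw [hci, hcj, ← hv_eq]))
      rw [mul_comm (bV.repr v' i), mul_comm (bV.repr v i)]
      rw [mul_comm (bV.repr v i)] at hv
      exact glt_eps_mul_mul_mul hR htan hG hv hj hcj hi
    · exact glt_eps_mul_mul_mul hR htan hG hv hi hci hj
  rw [hv'_eq, hqb.q_smul_add_smul]
  exact glt_eps_mul_add hR (glt_eps_mul_add hR
    (gle_glt_trans (gle_eps_mul_of_mle hR (mle_sq_mul hi _)) hlti)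
    (gle_glt_trans (gle_eps_mul_of_mle hR (mle_sq_mul hj _)) hltj)) hcross

theorem ghostQMinimal_of_card_support_eq_one_or_two (hR : IsSupertropical R)
    (htan : TangibleSSF R) (hG : GhostCancellative R)
    (hqb : IsQuadPair q b) {v : V} (hv : q v ∈ tangible R) (hmin : QMinimal q v)
    (hcard : (bV.repr v).support.card = 1 ∨ (bV.repr v).support.card = 2) :
    GhostQMinimal q v := by
  rcases hcard with hcard | hcard
  · obtain ⟨i, hsupp⟩ := Finset.card_eq_one.mp hcard
    exact ghostQMinimal_of_support_eq_singleton bV hR htan hG hqb hv hsupp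
  · obtain ⟨i, j, hij, hsupp⟩ := Finset.card_eq_two.mp hcard
    exact ghostQMinimal_of_support_eq_pair bV hR htan hG hqb hij hv hmin hsupp

theorem rsup_zero_left (a : R) : rsup 0 a = a := by
  unfold rsup
  split_ifs with h <;> simp [h]

theorem rsup_zero_right (a : R) : rsup a 0 = a := by
  unfold rsup
  split_ifs <;> simp

theorem support_repr_vsup_subset [DecidableEq ι] (x y : V) :
    (bV.repr (vsup bV x y)).support ⊆ (bV.repr x).support ∪ (bV.repr y).support := by
  rw [vsup, LinearEquiv.apply_symm_apply]
  exact Finsupp.support_zipWith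

theorem vsup_eq_add_of_disjoint {y z : V}
    (hdisj : Disjoint (bV.repr y).support (bV.repr z).support) : vsup bV y z = y + z := by
  apply bV.repr.injective
  ext k
  rw [vsup, LinearEquiv.apply_symm_apply, Finsupp.zipWith_apply, map_add, Finsupp.add_apply]
  by_cases hk : k ∈ (bV.repr y).support
  · rw [Finsupp.notMem_support_iff.mp (Finset.disjoint_left.mp hdisj hk), rsup_zero_right,
      add_zero]
  · rw [Finsupp.notMem_support_iff.mp hk, rsup_zero_left, zero_add]

end Basis

theorem stmt18_general {R : Type*} [CommSemiring R] (hR : IsSupertropical R)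
    (htan : TangibleSSF R)
    (hmul : ∀ g ∈ ghost R, ∀ h ∈ ghost R, g * h ∈ ghost R)
    (hcanc : ∀ g ∈ ghost R, ∀ a ∈ ghost R, ∀ c ∈ ghost R, g * a = g * c → a = c)
    {V : Type*} [AddCommMonoid V] [Module R V]
    (n : ℕ) (bV : Module.Basis (Fin n) R V)
    (q : V → R) (b : V → V → R) (hqb : IsQuadPair q b)
    (y z : V)
    (hyq : q y ∈ tangible R) (hzq : q z ∈ tangible R)
    (hymin : QMinimal q y) (hzmin : QMinimal q z)
    (hfull : (bV.repr (vsup bV y z)).support = Finset.univ)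
    (hb : glt (eps R * b y z) (eps R * q y))
    (hqq : eps R * q y = eps R * q z)
    (hcase : (n = 3 ∧ (bV.repr y).support.card = 1 ∧ (bV.repr z).support.card = 2) ∨
      (n = 4 ∧ (bV.repr y).support.card = 2 ∧ (bV.repr z).support.card = 2)) :
    QMinimal q (vsup bV y z) := by
  have hdisj : Disjoint (bV.repr y).support (bV.repr z).support := by
    have hunion : (bV.repr y).support ∪ (bV.repr z).support = Finset.univ :=
      Finset.univ_subset_iff.mp (hfull ▸ support_repr_vsup_subset bV y z)
    rw [← Finset.card_union_eq_card_add_card, hunion, Finset.card_univ, Fintype.card_fin]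
    omega
  rw [vsup_eq_add_of_disjoint bV hdisj]
  refine qMinimal_add hR hqb (fun x' h => exists_add_of_mle_add bV hdisj h) hyq hzq ?_ ?_ hb hqq
  · exact ghostQMinimal_of_card_support_eq_one_or_two bV hR htan ⟨hmul, hcanc⟩ hqb hyq hymin
      (by omega)
  · exact ghostQMinimal_of_card_support_eq_one_or_two bV hR htan ⟨hmul, hcanc⟩ hqb hzq hzmin
      (by omega)

/-- if `y, z` are `g`-anisotropic `q`-minimal vectors whose maximum has
full support, `e·b(y,z) < e·q(y) = e·q(z)`, and the supports have the indicated sizes,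
then `y ∨ z` is `q`-minimal. -/
theorem stmt18 {R : Type*} [CommSemiring R] (hR : IsSupertropical R)
    (htan : TangibleSSF R) (hid : eps R ∈ ghost R)
    (hmul : ∀ g ∈ ghost R, ∀ h ∈ ghost R, g * h ∈ ghost R)
    (hcanc : ∀ g ∈ ghost R, ∀ a ∈ ghost R, ∀ c ∈ ghost R, g * a = g * c → a = c)
    {V : Type*} [AddCommMonoid V] [Module R V]
    (n : ℕ) (bV : Module.Basis (Fin n) R V)
    (q : V → R) (b : V → V → R) (hqb : IsQuadPair q b)
    (y z : V) (hy : y ≠ 0) (hz : z ≠ 0)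
    (hyq : q y ∈ tangible R) (hzq : q z ∈ tangible R)
    (hymin : QMinimal q y) (hzmin : QMinimal q z)
    (hfull : (bV.repr (vsup bV y z)).support = Finset.univ)
    (hb : glt (eps R * b y z) (eps R * q y))
    (hqq : eps R * q y = eps R * q z)
    (hcase : (n = 3 ∧ (bV.repr y).support.card = 1 ∧ (bV.repr z).support.card = 2) ∨
      (n = 4 ∧ (bV.repr y).support.card = 2 ∧ (bV.repr z).support.card = 2)) :
    QMinimal q (vsup bV y z) :=
  stmt18_general hR htan hmul hcanc n bV q b hqb y z hyq hzq hymin hzmin hfull hb hqq hcase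

end Supertrop
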